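/- arXiv:1605.02728 — 2 statements merged into one kernel-verified Lean document; each statement's English description precedes it below -/
import Mathlib

section
/- For 0 < q < 1 and all complex z with z ≠ q^{-n} for n = 0,1,2,..., one has (-z;q)_∞ = ∑_{n=0}^∞ (q^{2n²-n} z^{2n}/(q²;q²)_n) · A_q(-q^{2n-1} z), where A_q(z) = ∑_{k=0}^∞ (-z)^k q^{k²}/(q;q)_k is the Ramanujan entire function. -/
noncomputable def qpC (q a : ℂ) (n : ℕ) : ℂ := ∏ k ∈ Finset.range n, (1 - a * q ^ k)

noncomputable def qpiC (q a : ℂ) : ℂ := ∏' k : ℕ, (1 - a * q ^ k)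

noncomputable def Aq (q : ℝ) (z : ℂ) : ℂ :=
  ∑' k : ℕ, (q : ℂ) ^ (k ^ 2) * (-z) ^ k / qpC (q : ℂ) (q : ℂ) k

/-!
Euler's identity `(-z;q)_∞ = ∑ q^{C(m,2)} z^m / (q;q)_m` turns the left side into a power series.
On the right, expanding `A_q(-q^{2n-1} z)` and using
`n(2n-1) + k² + (2n-1)k = C(2n+k,2) + C(k,2)` regroups the double series as
`∑_m q^{C(m,2)} z^m ∑_{2n+k=m} q^{C(k,2)} / ((q²;q²)_n (q;q)_k)`. The inner sum is the coefficient
of `x^m` in `(-x;q)_∞ / (x²;q²)_∞ = 1 / (x;q)_∞`, i.e. `1 / (q;q)_m`; rather than through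
infinite products, this is checked by showing that both sides satisfy the same three-term
recurrence, which follows from the first-order recurrences of the two factors. Euler's identity
itself comes from iterating `F(w) = (1 + w) F(qw)` for the series `F` and letting `F(q^N w) → 1`.
-/

open Finset Filter Topology

lemma Nat.add_one_choose_two (n : ℕ) : (n + 1).choose 2 = n + n.choose 2 := by
  rw [Nat.choose_succ_succ', Nat.choose_one_right]

lemma Nat.two_mul_choose_two (n : ℕ) : (2 * n).choose 2 = n * (2 * n - 1) := by
  rw [Nat.choose_two_right, mul_assoc, Nat.mul_div_cancel_left _ two_pos]

lemma summable_pow_choose_two_mul_pow {r : ℝ} (hr0 : 0 ≤ r) (hr1 : r < 1) (t : ℝ) :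
    Summable fun n : ℕ => r ^ n.choose 2 * t ^ n := by
  have hlim : Tendsto (fun n : ℕ => r ^ n * |t|) atTop (𝓝 0) := by
    simpa using (tendsto_pow_atTop_nhds_zero_of_lt_one hr0 hr1).mul_const |t|
  refine summable_of_ratio_norm_eventually_le (by norm_num : (1 / 2 : ℝ) < 1) ?_
  filter_upwards [hlim.eventually (ge_mem_nhds (by norm_num : (0 : ℝ) < 1 / 2))] with n hn
  simp only [Nat.add_one_choose_two, norm_mul, norm_pow, Real.norm_eq_abs, abs_of_nonneg hr0]
  calc r ^ (n + n.choose 2) * |t| ^ (n + 1) = r ^ n * |t| * (r ^ n.choose 2 * |t| ^ n) := by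
        ring
    _ ≤ 1 / 2 * (r ^ n.choose 2 * |t| ^ n) := by gcongr

lemma tsum_eq_tsum_sum_antidiagonal {E : Type*} [NormedAddCommGroup E] [CompleteSpace E]
    {f : ℕ × ℕ → E} (hf : Summable f) : ∑' p, f p = ∑' m, ∑ p ∈ antidiagonal m, f p := by
  rw [← HasAntidiagonal.sigmaAntidiagonalEquivProd.tsum_eq]
  exact (HasAntidiagonal.sigmaAntidiagonalEquivProd.summable_iff.2 hf).tsum_sigma.trans
    (tsum_congr fun m => Finset.tsum_subtype (antidiagonal m) f)

section QPochhammer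

variable {q a : ℂ}

lemma qpC_zero (q a : ℂ) : qpC q a 0 = 1 := prod_range_zero _

lemma qpC_succ (q a : ℂ) (n : ℕ) : qpC q a (n + 1) = qpC q a n * (1 - a * q ^ n) :=
  prod_range_succ _ n

lemma one_sub_norm_le_norm_one_sub_mul_pow (hq : ‖q‖ ≤ 1) (n : ℕ) :
    1 - ‖a‖ ≤ ‖1 - a * q ^ n‖ := by
  have hqn : ‖q‖ ^ n ≤ 1 := pow_le_one₀ (norm_nonneg q) hq
  calc 1 - ‖a‖ ≤ 1 - ‖a * q ^ n‖ := by
        rw [norm_mul, norm_pow]; nlinarith [norm_nonneg a]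
    _ ≤ ‖1 - a * q ^ n‖ := by simpa using norm_sub_norm_le 1 (a * q ^ n)

lemma qpC_ne_zero (hq : ‖q‖ ≤ 1) (ha : ‖a‖ < 1) (n : ℕ) : qpC q a n ≠ 0 :=
  prod_ne_zero_iff.2 fun k _ =>
    norm_pos_iff.1 ((sub_pos.2 ha).trans_le (one_sub_norm_le_norm_one_sub_mul_pow hq k))

lemma norm_inv_qpC_le (hq : ‖q‖ ≤ 1) (ha : ‖a‖ < 1) (n : ℕ) :
    ‖(qpC q a n)⁻¹‖ ≤ (1 - ‖a‖)⁻¹ ^ n := by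
  rw [qpC, ← prod_inv_distrib, norm_prod]
  calc ∏ k ∈ range n, ‖(1 - a * q ^ k)⁻¹‖ ≤ ∏ _k ∈ range n, (1 - ‖a‖)⁻¹ := by
        refine prod_le_prod (fun k _ => norm_nonneg _) fun k _ => ?_
        rw [norm_inv]
        exact inv_anti₀ (sub_pos.2 ha) (one_sub_norm_le_norm_one_sub_mul_pow hq k)
    _ = (1 - ‖a‖)⁻¹ ^ n := by simp

end QPochhammer

section Euler

variable {q : ℂ}

/-- The coefficient of `w ^ m` in `(-w; q)_∞`. -/
noncomputable def eulerCoeff (q : ℂ) (m : ℕ) : ℂ := q ^ m.choose 2 / qpC q q m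

noncomputable def eulerSeries (q w : ℂ) : ℂ := ∑' m, eulerCoeff q m * w ^ m

lemma eulerCoeff_zero (q : ℂ) : eulerCoeff q 0 = 1 := by simp [eulerCoeff, qpC_zero]

lemma one_sub_pow_mul_eulerCoeff_succ (hq : ‖q‖ < 1) (m : ℕ) :
    (1 - q ^ (m + 1)) * eulerCoeff q (m + 1) = q ^ m * eulerCoeff q m := by
  have hne := qpC_ne_zero hq.le hq (m + 1)
  rw [qpC_succ, ← pow_succ'] at hne
  have h1 : 1 - q ^ (m + 1) ≠ 0 := right_ne_zero_of_mul hne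
  rw [eulerCoeff, eulerCoeff, qpC_succ, ← pow_succ', Nat.add_one_choose_two,
    pow_add q m (m.choose 2)]
  field_simp

lemma norm_eulerCoeff_le (hq : ‖q‖ < 1) (m : ℕ) :
    ‖eulerCoeff q m‖ ≤ ‖q‖ ^ m.choose 2 * (1 - ‖q‖)⁻¹ ^ m := by
  rw [eulerCoeff, div_eq_mul_inv, norm_mul, norm_pow]
  gcongr
  exact norm_inv_qpC_le hq.le hq m

lemma summable_norm_eulerCoeff_mul_pow (hq : ‖q‖ < 1) (w : ℂ) :
    Summable fun m => ‖eulerCoeff q m‖ * ‖w‖ ^ m := by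
  refine (summable_pow_choose_two_mul_pow (norm_nonneg q) hq ((1 - ‖q‖)⁻¹ * ‖w‖)).of_nonneg_of_le
    (fun m => by positivity) fun m => ?_
  rw [mul_pow, ← mul_assoc]
  gcongr
  exact norm_eulerCoeff_le hq m

lemma summable_eulerCoeff_mul_pow (hq : ‖q‖ < 1) (w : ℂ) :
    Summable fun m => eulerCoeff q m * w ^ m :=
  .of_norm <| by simpa [norm_mul, norm_pow] using summable_norm_eulerCoeff_mul_pow hq w

lemma eulerSeries_eq_one_add_mul (hq : ‖q‖ < 1) (w : ℂ) :
    eulerSeries q w = (1 + w) * eulerSeries q (q * w) := by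
  have hs := summable_eulerCoeff_mul_pow hq
  have hshift (u : ℂ) : eulerSeries q u = 1 + ∑' m, eulerCoeff q (m + 1) * u ^ (m + 1) := by
    rw [eulerSeries, (hs u).tsum_eq_zero_add, eulerCoeff_zero, pow_zero, mul_one]
  have hterm (m : ℕ) : eulerCoeff q (m + 1) * w ^ (m + 1) =
      eulerCoeff q (m + 1) * (q * w) ^ (m + 1) + w * (eulerCoeff q m * (q * w) ^ m) := by
    rw [mul_pow, mul_pow]
    linear_combination w ^ (m + 1) * one_sub_pow_mul_eulerCoeff_succ hq m
  rw [hshift w, tsum_congr hterm, ((summable_nat_add_iff 1).2 (hs _)).tsum_add ((hs _).mul_left w),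
    tsum_mul_left, ← eulerSeries]
  linear_combination -hshift (q * w)

lemma eulerSeries_eq_prod_mul (hq : ‖q‖ < 1) (w : ℂ) (N : ℕ) :
    eulerSeries q w = (∏ k ∈ range N, (1 + w * q ^ k)) * eulerSeries q (q ^ N * w) := by
  induction N with
  | zero => simp
  | succ N ih =>
    rw [ih, eulerSeries_eq_one_add_mul hq, ← mul_assoc q, ← pow_succ', prod_range_succ]
    ring

lemma tendsto_eulerSeries_pow_mul (hq : ‖q‖ < 1) (w : ℂ) :
    Tendsto (fun N : ℕ => eulerSeries q (q ^ N * w)) atTop (𝓝 1) := by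
  have hqN := tendsto_pow_atTop_nhds_zero_of_norm_lt_one hq
  have h := tendsto_tsum_of_dominated_convergence (summable_norm_eulerCoeff_mul_pow hq w)
    (fun m => ((hqN.mul_const w).pow m).const_mul (eulerCoeff q m))
    (Eventually.of_forall fun N m => ?_)
  · simpa [eulerSeries, zero_pow_eq, eulerCoeff_zero] using h
  · rw [norm_mul, norm_pow, norm_mul, norm_pow]
    gcongr
    exact mul_le_of_le_one_left (norm_nonneg w) (pow_le_one₀ (norm_nonneg q) hq.le)

theorem tprod_one_add_mul_pow (hq : ‖q‖ < 1) (w : ℂ) :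
    ∏' k, (1 + w * q ^ k) = eulerSeries q w := by
  have hmul : Multipliable fun k => 1 + w * q ^ k :=
    multipliable_one_add_of_summable <| by
      simpa [norm_mul, norm_pow] using
        (summable_geometric_of_lt_one (norm_nonneg q) hq).mul_left ‖w‖
  have h := hmul.hasProd.tendsto_prod_nat.mul (tendsto_eulerSeries_pow_mul hq w)
  rw [mul_one] at h
  refine tendsto_nhds_unique h ?_
  simp_rw [← eulerSeries_eq_prod_mul hq w]
  exact tendsto_const_nhds

end Euler

theorem sum_antidiagonal_mul_of_recurrence {R : Type*} [CommRing R] {q : R} {a b : ℕ → R}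
    (ha₁ : a 1 = 0) (ha : ∀ i, (1 - q ^ (i + 2)) * a (i + 2) = a i)
    (hb : ∀ k, (1 - q ^ (k + 1)) * b (k + 1) = q ^ k * b k) (m : ℕ) :
    (1 - q ^ (m + 2)) * ∑ p ∈ antidiagonal (m + 2), a p.1 * b p.2 =
      ∑ p ∈ antidiagonal m, a p.1 * b p.2 +
        q ^ (m + 1) * ∑ p ∈ antidiagonal (m + 1), a p.1 * b p.2 := by
  -- on `i + k = m + 2`, split `1 - q ^ (m + 2) = (1 - q ^ i) + q ^ i * (1 - q ^ k)`
  have hsplit : (1 - q ^ (m + 2)) * ∑ p ∈ antidiagonal (m + 2), a p.1 * b p.2 =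
      ∑ p ∈ antidiagonal (m + 2), (1 - q ^ p.1) * a p.1 * b p.2 +
        ∑ p ∈ antidiagonal (m + 2), q ^ p.1 * a p.1 * ((1 - q ^ p.2) * b p.2) := by
    rw [mul_sum, ← sum_add_distrib]
    refine sum_congr rfl fun p hp => ?_
    rw [← mem_antidiagonal.1 hp, pow_add]
    ring
  have hfirst : ∑ p ∈ antidiagonal (m + 2), (1 - q ^ p.1) * a p.1 * b p.2 =
      ∑ p ∈ antidiagonal m, a p.1 * b p.2 := by
    simp only [Nat.sum_antidiagonal_succ, pow_zero, sub_self, zero_mul, zero_add, ha₁, mul_zero,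
      add_assoc, ha]
  have hsecond : ∑ p ∈ antidiagonal (m + 2), q ^ p.1 * a p.1 * ((1 - q ^ p.2) * b p.2) =
      q ^ (m + 1) * ∑ p ∈ antidiagonal (m + 1), a p.1 * b p.2 := by
    rw [Nat.sum_antidiagonal_succ', mul_sum]
    simp only [pow_zero, sub_self, zero_mul, mul_zero, zero_add, hb]
    refine sum_congr rfl fun p hp => ?_
    rw [← mem_antidiagonal.1 hp, pow_add]
    ring
  rw [hsplit, hfirst, hsecond]

section Coefficients

variable {q : ℂ}

/-- The coefficient of `x ^ i` in `1 / (x²; q²)_∞ = ∑ x^{2n} / (q²; q²)_n`. -/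
noncomputable def invPochSqCoeff (q : ℂ) (i : ℕ) : ℂ :=
  if Even i then (qpC (q ^ 2) (q ^ 2) (i / 2))⁻¹ else 0

lemma invPochSqCoeff_zero (q : ℂ) : invPochSqCoeff q 0 = 1 := by
  simp [invPochSqCoeff, qpC_zero]

lemma invPochSqCoeff_one (q : ℂ) : invPochSqCoeff q 1 = 0 := by
  simp [invPochSqCoeff]

lemma invPochSqCoeff_two_mul (q : ℂ) (n : ℕ) :
    invPochSqCoeff q (2 * n) = (qpC (q ^ 2) (q ^ 2) n)⁻¹ := by
  simp [invPochSqCoeff]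

lemma one_sub_pow_mul_invPochSqCoeff_add_two (hq : ‖q‖ < 1) (i : ℕ) :
    (1 - q ^ (i + 2)) * invPochSqCoeff q (i + 2) = invPochSqCoeff q i := by
  rcases Nat.even_or_odd i with ⟨n, rfl⟩ | hodd
  · have hq2 : ‖q ^ 2‖ < 1 := by rw [norm_pow]; exact pow_lt_one₀ (norm_nonneg q) hq two_ne_zero
    have hfac : q ^ 2 * (q ^ 2) ^ n = q ^ (2 * (n + 1)) := by ring
    have hne := qpC_ne_zero hq2.le hq2 (n + 1)
    rw [qpC_succ, hfac] at hne
    rw [← two_mul, ← mul_add_one, invPochSqCoeff_two_mul, invPochSqCoeff_two_mul, qpC_succ, hfac,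
      mul_inv, mul_left_comm, mul_inv_cancel₀ (right_ne_zero_of_mul hne), mul_one]
  · have hodd2 : ¬Even (i + 2) := by simpa [Nat.even_add] using Nat.not_even_iff_odd.2 hodd
    simp [invPochSqCoeff, hodd2, Nat.not_even_iff_odd.2 hodd]

lemma norm_invPochSqCoeff_le (hq : ‖q‖ < 1) (i : ℕ) :
    ‖invPochSqCoeff q i‖ ≤ (1 - ‖q‖)⁻¹ ^ i := by
  have hB : 1 ≤ (1 - ‖q‖)⁻¹ := (one_le_inv₀ (sub_pos.2 hq)).2 (by linarith [norm_nonneg q])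
  rcases Nat.even_or_odd' i with ⟨n, rfl | rfl⟩
  · have hq2 : ‖q ^ 2‖ < 1 := by rw [norm_pow]; exact pow_lt_one₀ (norm_nonneg q) hq two_ne_zero
    calc ‖invPochSqCoeff q (2 * n)‖ ≤ (1 - ‖q ^ 2‖)⁻¹ ^ n := by
          rw [invPochSqCoeff_two_mul]; exact norm_inv_qpC_le hq2.le hq2 n
      _ ≤ (1 - ‖q‖)⁻¹ ^ n := by
          gcongr
          rw [norm_pow]
          exact pow_le_of_le_one (norm_nonneg q) hq.le two_ne_zero
      _ ≤ (1 - ‖q‖)⁻¹ ^ (2 * n) := pow_le_pow_right₀ hB (by omega)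
  · simp [invPochSqCoeff]
    positivity

theorem sum_antidiagonal_invPochSqCoeff_mul_eulerCoeff (hq : ‖q‖ < 1) (m : ℕ) :
    ∑ p ∈ antidiagonal m, invPochSqCoeff q p.1 * eulerCoeff q p.2 = (qpC q q m)⁻¹ := by
  have hrec := sum_antidiagonal_mul_of_recurrence (invPochSqCoeff_one q)
    (one_sub_pow_mul_invPochSqCoeff_add_two hq) (one_sub_pow_mul_eulerCoeff_succ hq)
  have hne (m : ℕ) : qpC q q m * (1 - q ^ (m + 1)) * (1 - q ^ (m + 2)) ≠ 0 := by
    simpa only [qpC_succ, ← pow_succ'] using qpC_ne_zero hq.le hq (m + 2)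
  have hinv (m : ℕ) : (1 - q ^ (m + 2)) * (qpC q q (m + 2))⁻¹ =
      (qpC q q m)⁻¹ + q ^ (m + 1) * (qpC q q (m + 1))⁻¹ := by
    obtain ⟨⟨h0, h1⟩, h2⟩ := mul_ne_zero_iff.1 (hne m) |>.imp_left mul_ne_zero_iff.1
    simp only [qpC_succ, ← pow_succ']
    field_simp
    ring
  suffices h : ∀ m, (∑ p ∈ antidiagonal m, invPochSqCoeff q p.1 * eulerCoeff q p.2 =
      (qpC q q m)⁻¹) ∧ ∑ p ∈ antidiagonal (m + 1), invPochSqCoeff q p.1 * eulerCoeff q p.2 =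
      (qpC q q (m + 1))⁻¹ from (h m).1
  intro m
  induction m with
  | zero => simp [Nat.sum_antidiagonal_succ, invPochSqCoeff_zero, invPochSqCoeff_one, eulerCoeff,
      qpC_succ, qpC_zero]
  | succ m ih =>
    refine ⟨ih.2, mul_left_cancel₀ (right_ne_zero_of_mul (hne m)) ?_⟩
    rw [hrec, ih.1, ih.2, hinv]

end Coefficients

section Rearrangement

variable {q : ℂ}

lemma summable_invPochSqCoeff_mul_eulerCoeff (hq : ‖q‖ < 1) (z : ℂ) :
    Summable fun p : ℕ × ℕ => invPochSqCoeff q p.1 * eulerCoeff q p.2 *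
      (q ^ (p.1 + p.2).choose 2 * z ^ (p.1 + p.2)) := by
  set B := (1 - ‖q‖)⁻¹
  have hs := summable_pow_choose_two_mul_pow (norm_nonneg q) hq (B * ‖z‖)
  refine Summable.of_norm_bounded (hs.mul_of_nonneg hs (fun _ => by positivity)
    fun _ => by positivity) fun ⟨i, k⟩ => ?_
  have hchoose : ‖q‖ ^ (i + k).choose 2 ≤ ‖q‖ ^ i.choose 2 :=
    pow_le_pow_of_le_one (norm_nonneg q) hq.le (Nat.choose_le_choose 2 (Nat.le_add_right i k))
  calc ‖invPochSqCoeff q i * eulerCoeff q k * (q ^ (i + k).choose 2 * z ^ (i + k))‖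
      = ‖invPochSqCoeff q i‖ * ‖eulerCoeff q k‖ * (‖q‖ ^ (i + k).choose 2 * ‖z‖ ^ (i + k)) := by
        simp only [norm_mul, norm_pow]
    _ ≤ B ^ i * (‖q‖ ^ k.choose 2 * B ^ k) * (‖q‖ ^ i.choose 2 * ‖z‖ ^ (i + k)) := by
        gcongr
        · exact norm_invPochSqCoeff_le hq i
        · exact norm_eulerCoeff_le hq k
    _ = ‖q‖ ^ i.choose 2 * (B * ‖z‖) ^ i * (‖q‖ ^ k.choose 2 * (B * ‖z‖) ^ k) := by ring

theorem eulerSeries_eq_tsum_tsum_invPochSqCoeff_mul_eulerCoeff (hq : ‖q‖ < 1) (z : ℂ) :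
    eulerSeries q z = ∑' (n : ℕ) (k : ℕ), invPochSqCoeff q (2 * n) * eulerCoeff q k *
      (q ^ (2 * n + k).choose 2 * z ^ (2 * n + k)) := by
  set f := fun p : ℕ × ℕ => invPochSqCoeff q p.1 * eulerCoeff q p.2 *
    (q ^ (p.1 + p.2).choose 2 * z ^ (p.1 + p.2))
  have hf : Summable f := summable_invPochSqCoeff_mul_eulerCoeff hq z
  have hodd : (Function.support fun i => ∑' k, f (i, k)) ⊆ Set.range (2 * ·) := by
    intro i hi
    obtain ⟨n, rfl⟩ : Even i := by
      by_contra hodd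
      simp [f, invPochSqCoeff, hodd] at hi
    exact ⟨n, two_mul n⟩
  calc eulerSeries q z = ∑' m, (∑ p ∈ antidiagonal m, invPochSqCoeff q p.1 * eulerCoeff q p.2) *
        (q ^ m.choose 2 * z ^ m) := by
        refine tsum_congr fun m => ?_
        rw [sum_antidiagonal_invPochSqCoeff_mul_eulerCoeff hq, eulerCoeff]
        ring
    _ = ∑' m, ∑ p ∈ antidiagonal m, f p := by
        refine tsum_congr fun m => ?_
        rw [sum_mul]
        exact sum_congr rfl fun p hp => by rw [← mem_antidiagonal.1 hp]
    _ = ∑' p, f p := (tsum_eq_tsum_sum_antidiagonal hf).symm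
    _ = ∑' (i : ℕ) (k : ℕ), f (i, k) := hf.tsum_prod
    _ = _ := ((mul_right_injective₀ two_ne_zero).tsum_eq hodd).symm

end Rearrangement

lemma pow_div_qpC_mul_Aq_eq_tsum {q : ℝ} (hq : q ≠ 0) (z : ℂ) (n : ℕ) :
    (q : ℂ) ^ (n * (2 * n - 1)) * z ^ (2 * n) / qpC ((q : ℂ) ^ 2) ((q : ℂ) ^ 2) n *
        Aq q (-(q : ℂ) ^ (2 * (n : ℤ) - 1) * z) =
      ∑' k, invPochSqCoeff q (2 * n) * eulerCoeff q k *
        ((q : ℂ) ^ (2 * n + k).choose 2 * z ^ (2 * n + k)) := by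
  have hpow (k : ℕ) : (q : ℂ) ^ (n * (2 * n - 1)) * (q : ℂ) ^ (k ^ 2) *
      ((q : ℂ) ^ (2 * (n : ℤ) - 1)) ^ k =
        (q : ℂ) ^ (2 * n + k).choose 2 * (q : ℂ) ^ k.choose 2 := by
    simp only [← Nat.two_mul_choose_two, ← zpow_natCast, ← zpow_mul,
      ← zpow_add₀ (Complex.ofReal_ne_zero.2 hq)]
    congr 1
    qify
    simp only [Nat.cast_choose_two]
    push_cast
    ring
  rw [Aq, ← tsum_mul_left]
  refine tsum_congr fun k => ?_
  rw [neg_mul, neg_neg, mul_pow, invPochSqCoeff_two_mul, eulerCoeff, pow_add z]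
  linear_combination z ^ (2 * n) * z ^ k * (qpC ((q : ℂ) ^ 2) ((q : ℂ) ^ 2) n)⁻¹ *
    (qpC (q : ℂ) q k)⁻¹ * hpow k

theorem qexp_as_Aq_sum_general (q : ℝ) (hq0 : 0 < q) (hq1 : q < 1) (z : ℂ) :
    qpiC (q : ℂ) (-z) =
      ∑' n : ℕ, (q : ℂ) ^ (n * (2 * n - 1)) * z ^ (2 * n) /
          qpC ((q : ℂ) ^ 2) ((q : ℂ) ^ 2) n *
        Aq q (-(q : ℂ) ^ (2 * (n : ℤ) - 1) * z) := by
  have hq : ‖(q : ℂ)‖ < 1 := by rwa [Complex.norm_real, Real.norm_of_nonneg hq0.le]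
  calc qpiC (q : ℂ) (-z) = ∏' k, (1 + z * (q : ℂ) ^ k) := by
        simp only [qpiC, neg_mul, sub_neg_eq_add]
    _ = eulerSeries q z := tprod_one_add_mul_pow hq z
    _ = _ := eulerSeries_eq_tsum_tsum_invPochSqCoeff_mul_eulerCoeff hq z
    _ = _ := tsum_congr fun n => (pow_div_qpC_mul_Aq_eq_tsum hq0.ne' z n).symm

theorem qexp_as_Aq_sum (q : ℝ) (hq0 : 0 < q) (hq1 : q < 1) (z : ℂ)
    (hz : ∀ n : ℕ, z ≠ (q : ℂ) ^ (-(n : ℤ))) :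
    qpiC (q : ℂ) (-z) =
      ∑' n : ℕ, (q : ℂ) ^ (n * (2 * n - 1)) * z ^ (2 * n) /
          qpC ((q : ℂ) ^ 2) ((q : ℂ) ^ 2) n *
        Aq q (-(q : ℂ) ^ (2 * (n : ℤ) - 1) * z) :=
  qexp_as_Aq_sum_general q hq0 hq1 z
end

section
/- For 0 < q < 1 and nonnegative integer n, the Stieltjes–Wigert polynomials satisfy S_{2n+1}(q^{-2n-1}; q) = 0 and S_{2n}(q^{-2n}; q) = (-1)^n q^{-n²}/(q²;q²)_n, where S_n(x;q) = ∑_{k=0}^n q^{k²}(-x)^k/((q;q)_k (q;q)_{n-k}). -/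
noncomputable def qp (q a : ℝ) (n : ℕ) : ℝ := ∏ k ∈ Finset.range n, (1 - a * q ^ k)

noncomputable def SW (q x : ℝ) (n : ℕ) : ℝ :=
  ∑ k ∈ Finset.range (n + 1), q ^ (k ^ 2) * (-x) ^ k / (qp q q k * qp q q (n - k))

/-!
At `x = q⁻ⁿ` the `k`-th term of `S_n` is `(-1)ᵏ q^(-k(n-k)) / ((q;q)_k (q;q)_(n-k))`, which
picks up the sign `(-1)ⁿ` under `k ↦ n - k`; hence the odd values vanish. The two splittings
`1 - q^(i+j) = (1 - qʲ) + qʲ (1 - qⁱ) = (1 - qⁱ) + qⁱ (1 - qʲ)` of the `q`-Pascal rule give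
`(1 - q^(n+1)) S_(n+1)(x) = S_n(x) - q^(n+1) x S_n(qx) = S_n(qx) - qx S_n(q²x)`.
Evaluated at `x = q^(-2n-1)` and `x = q^(-2n-2)`, and combined with the vanishing of the odd
values, they give `(1 - q^(2n+2)) S_(2n+2)(q^(-2n-2)) = -q^(-2n-1) S_(2n)(q^(-2n))`, and the even
values follow by induction.
-/

open Finset Finset.Nat

lemma qp_succ (q a : ℝ) (n : ℕ) : qp q a (n + 1) = qp q a n * (1 - a * q ^ n) :=
  prod_range_succ _ _

lemma qp_ne_zero {q a : ℝ} {n : ℕ} (h : ∀ k < n, a * q ^ k ≠ 1) : qp q a n ≠ 0 :=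
  prod_ne_zero_iff.2 fun k hk => sub_ne_zero.2 (h k (mem_range.1 hk)).symm

lemma SW_eq_sum_antidiagonal (q x : ℝ) (n : ℕ) :
    SW q x n = ∑ p ∈ antidiagonal n,
      q ^ p.1 ^ 2 * (-x) ^ p.1 * (qp q q p.1)⁻¹ * (qp q q p.2)⁻¹ := by
  rw [SW, sum_antidiagonal_eq_sum_range_succ
    (fun i j => q ^ i ^ 2 * (-x) ^ i * (qp q q i)⁻¹ * (qp q q j)⁻¹)]
  simp only [div_eq_mul_inv, mul_inv, mul_assoc]

lemma one_sub_pow_mul_inv_qp_succ {q : ℝ} {i : ℕ} (h : q ^ (i + 1) ≠ 1) :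
    (1 - q ^ (i + 1)) * (qp q q (i + 1))⁻¹ = (qp q q i)⁻¹ := by
  rw [qp_succ, ← pow_succ', mul_inv, mul_left_comm, mul_inv_cancel₀ (sub_ne_zero.2 h.symm),
    mul_one]

section Recurrences

variable {q : ℝ} (hq : ∀ i : ℕ, q ^ (i + 1) ≠ 1)
include hq

theorem one_sub_pow_mul_sum_antidiagonal_succ (f : ℕ → ℕ → ℝ) (n : ℕ) :
    (1 - q ^ (n + 1)) *
        ∑ p ∈ antidiagonal (n + 1), f p.1 p.2 * (qp q q p.1)⁻¹ * (qp q q p.2)⁻¹ =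
      ∑ p ∈ antidiagonal n,
        (f p.1 (p.2 + 1) + q ^ p.2 * f (p.1 + 1) p.2) * (qp q q p.1)⁻¹ * (qp q q p.2)⁻¹ := by
  set g : ℕ × ℕ → ℝ := fun p => f p.1 p.2 * (qp q q p.1)⁻¹ * (qp q q p.2)⁻¹
  have split : ∀ p ∈ antidiagonal (n + 1),
      (1 - q ^ (n + 1)) * g p = (1 - q ^ p.2) * g p + q ^ p.2 * ((1 - q ^ p.1) * g p) := by
    intro p hp
    rw [← mem_antidiagonal.1 hp]
    ring
  rw [mul_sum, sum_congr rfl split, sum_add_distrib, sum_antidiagonal_succ',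
    sum_antidiagonal_succ]
  -- the boundary terms carry the factor `1 - q ^ 0`
  simp only [pow_zero, sub_self, zero_mul, mul_zero, zero_add, ← sum_add_distrib]
  refine sum_congr rfl fun p _ => ?_
  linear_combination
    (f p.1 (p.2 + 1) * (qp q q p.1)⁻¹) * one_sub_pow_mul_inv_qp_succ (hq p.2) +
    (q ^ p.2 * f (p.1 + 1) p.2 * (qp q q p.2)⁻¹) * one_sub_pow_mul_inv_qp_succ (hq p.1)

theorem one_sub_pow_mul_sum_antidiagonal_succ' (f : ℕ → ℕ → ℝ) (n : ℕ) :
    (1 - q ^ (n + 1)) *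
        ∑ p ∈ antidiagonal (n + 1), f p.1 p.2 * (qp q q p.1)⁻¹ * (qp q q p.2)⁻¹ =
      ∑ p ∈ antidiagonal n,
        (f (p.1 + 1) p.2 + q ^ p.1 * f p.1 (p.2 + 1)) * (qp q q p.1)⁻¹ * (qp q q p.2)⁻¹ := by
  conv_lhs => rw [← sum_antidiagonal_swap]
  conv_rhs => rw [← sum_antidiagonal_swap]
  convert one_sub_pow_mul_sum_antidiagonal_succ hq (fun i j => f j i) n using 2
  · exact sum_congr rfl fun p _ => by simp only [Prod.fst_swap, Prod.snd_swap]; ring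
  · simp only [Prod.fst_swap, Prod.snd_swap]; ring

theorem one_sub_pow_mul_SW_succ (x : ℝ) (n : ℕ) :
    (1 - q ^ (n + 1)) * SW q x (n + 1) = SW q x n - q ^ (n + 1) * x * SW q (q * x) n := by
  rw [SW_eq_sum_antidiagonal,
    one_sub_pow_mul_sum_antidiagonal_succ hq (fun i _ => q ^ i ^ 2 * (-x) ^ i),
    SW_eq_sum_antidiagonal, SW_eq_sum_antidiagonal, mul_sum, ← sum_sub_distrib]
  refine sum_congr rfl fun p hp => ?_
  rw [← mem_antidiagonal.1 hp]
  ring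

theorem one_sub_pow_mul_SW_succ' (x : ℝ) (n : ℕ) :
    (1 - q ^ (n + 1)) * SW q x (n + 1) = SW q (q * x) n - q * x * SW q (q ^ 2 * x) n := by
  rw [SW_eq_sum_antidiagonal,
    one_sub_pow_mul_sum_antidiagonal_succ' hq (fun i _ => q ^ i ^ 2 * (-x) ^ i),
    SW_eq_sum_antidiagonal, SW_eq_sum_antidiagonal, mul_sum, ← sum_sub_distrib]
  refine sum_congr rfl fun p _ => ?_
  ring

end Recurrences

section SpecialValues

variable {q : ℝ}

lemma SW_inv_pow_self_eq_sum (hq : q ≠ 0) (n : ℕ) :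
    SW q (q ^ n)⁻¹ n =
      ∑ p ∈ antidiagonal n,
        (-1) ^ p.1 * (q ^ (p.1 * p.2))⁻¹ * (qp q q p.1)⁻¹ * (qp q q p.2)⁻¹ := by
  rw [SW_eq_sum_antidiagonal]
  refine sum_congr rfl fun p hp => ?_
  rw [← mem_antidiagonal.1 hp, neg_pow, inv_pow]
  field_simp
  ring

theorem SW_inv_pow_self_eq_neg_one_pow_mul (hq : q ≠ 0) (n : ℕ) :
    SW q (q ^ n)⁻¹ n = (-1) ^ n * SW q (q ^ n)⁻¹ n := by
  rw [SW_inv_pow_self_eq_sum hq, mul_sum, ← sum_antidiagonal_swap]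
  refine sum_congr rfl fun p hp => ?_
  rw [← mem_antidiagonal.1 hp, Prod.fst_swap, Prod.snd_swap, pow_add, mul_comm p.2 p.1]
  have sign_sq : (-1 : ℝ) ^ p.1 * (-1) ^ p.1 = 1 := by rw [← mul_pow]; norm_num
  linear_combination
    -(-1) ^ p.2 * (q ^ (p.1 * p.2))⁻¹ * (qp q q p.1)⁻¹ * (qp q q p.2)⁻¹ * sign_sq

theorem SW_inv_pow_self_odd (hq : q ≠ 0) (n : ℕ) :
    SW q (q ^ (2 * n + 1))⁻¹ (2 * n + 1) = 0 := by
  have h := SW_inv_pow_self_eq_neg_one_pow_mul hq (2 * n + 1)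
  rw [(odd_two_mul_add_one n).neg_one_pow] at h
  linarith

variable (hq0 : q ≠ 0) (hq : ∀ i : ℕ, q ^ (i + 1) ≠ 1)
include hq0 hq

theorem one_sub_pow_mul_SW_inv_pow_self_add_two (n : ℕ) :
    (1 - q ^ (2 * n + 2)) * SW q (q ^ (2 * n + 2))⁻¹ (2 * n + 2) =
      -(q ^ (2 * n + 1))⁻¹ * SW q (q ^ (2 * n))⁻¹ (2 * n) := by
  have shift : ∀ k, q * (q ^ (k + 1))⁻¹ = (q ^ k)⁻¹ := fun k => by
    rw [pow_succ]; field_simp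
  have shift2 : q ^ 2 * (q ^ (2 * n + 2))⁻¹ = (q ^ (2 * n))⁻¹ := by
    rw [pow_add q (2 * n)]; field_simp
  have hval_shift : SW q (q ^ (2 * n + 1))⁻¹ (2 * n) = SW q (q ^ (2 * n))⁻¹ (2 * n) := by
    have h := one_sub_pow_mul_SW_succ hq (q ^ (2 * n + 1))⁻¹ (2 * n)
    rw [SW_inv_pow_self_odd hq0, shift, mul_inv_cancel₀ (pow_ne_zero _ hq0)] at h
    linarith
  have hodd_shift := one_sub_pow_mul_SW_succ' hq (q ^ (2 * n + 2))⁻¹ (2 * n)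
  rw [shift, shift2, hval_shift] at hodd_shift
  have heven := one_sub_pow_mul_SW_succ hq (q ^ (2 * n + 2))⁻¹ (2 * n + 1)
  rw [shift, SW_inv_pow_self_odd hq0, mul_inv_cancel₀ (pow_ne_zero _ hq0)] at heven
  have hne : 1 - q ^ (2 * n + 1) ≠ 0 := sub_ne_zero.2 (hq (2 * n)).symm
  refine mul_left_cancel₀ hne ?_
  linear_combination (1 - q ^ (2 * n + 1)) * heven + hodd_shift -
    SW q (q ^ (2 * n))⁻¹ (2 * n) * mul_inv_cancel₀ (pow_ne_zero (2 * n + 1) hq0)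

theorem SW_inv_pow_self_even (n : ℕ) :
    SW q (q ^ (2 * n))⁻¹ (2 * n) = (-1) ^ n * (q ^ (n ^ 2))⁻¹ / qp (q ^ 2) (q ^ 2) n := by
  induction n with
  | zero => simp [SW, qp]
  | succ n ih =>
    have hne : 1 - q ^ (2 * n + 2) ≠ 0 := sub_ne_zero.2 (hq (2 * n + 1)).symm
    have hqp : qp (q ^ 2) (q ^ 2) (n + 1) = qp (q ^ 2) (q ^ 2) n * (1 - q ^ (2 * n + 2)) := by
      rw [qp_succ, ← pow_mul, ← pow_add, two_mul, add_comm]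
    have hqp_ne : qp (q ^ 2) (q ^ 2) n ≠ 0 := qp_ne_zero fun k _ => by
      rw [← pow_mul, ← pow_add]; convert hq (2 * k + 1) using 2; ring
    have step := one_sub_pow_mul_SW_inv_pow_self_add_two hq0 hq n
    rw [show 2 * (n + 1) = 2 * n + 2 by ring, eq_div_of_mul_eq hne ((mul_comm _ _).trans step),
      ih, hqp]
    field_simp
    ring

end SpecialValues

theorem SW_special_values (q : ℝ) (hq0 : 0 < q) (hq1 : q < 1) (n : ℕ) :
    SW q (q ^ (-(2 * (n : ℤ) + 1))) (2 * n + 1) = 0 ∧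
    SW q (q ^ (-(2 * (n : ℤ)))) (2 * n) = (-1) ^ n * (q ^ (n ^ 2))⁻¹ / qp (q ^ 2) (q ^ 2) n := by
  have hq : ∀ i : ℕ, q ^ (i + 1) ≠ 1 := fun i => (pow_lt_one₀ hq0.le hq1 i.succ_ne_zero).ne
  have zpow_neg_natCast : ∀ m : ℕ, q ^ (-(m : ℤ)) = (q ^ m)⁻¹ := fun m => by
    rw [zpow_neg, zpow_natCast]
  constructor
  · rw [show -(2 * (n : ℤ) + 1) = -((2 * n + 1 : ℕ) : ℤ) by push_cast; ring,
      zpow_neg_natCast]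
    exact SW_inv_pow_self_odd hq0.ne' n
  · rw [show -(2 * (n : ℤ)) = -((2 * n : ℕ) : ℤ) by push_cast; ring, zpow_neg_natCast]
    exact SW_inv_pow_self_even hq0.ne' hq n
end
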